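/- Let m_X, m_Y, Ω_X, Ω_Y, α, C > 0 be real numbers, let γ_th > 0 be fixed, and for each γ̄ > 0 let f_{γ̄} be the α-Beaulieu-Xie shadowed SNR probability density with average SNR γ̄ and normalizing constant C. Then, as γ̄ → ∞, the outage probability P_out(γ̄) = ∫₀^{γ_th} f_{γ̄}(γ) dγ satisfies lim_{γ̄ → ∞} γ̄^{α m_X/2} · P_out(γ̄) = θ^{m_Y} γ_th^{α m_X/2}/(C^{m_X} Γ(m_X + 1)); equivalently, P_out(γ̄) is asymptotically equal to the upper bound P_out^{UB}(γ̄) = (θ^{m_Y}/(C^{m_X} Γ(m_X + 1))) (γ_th/γ̄)^{α m_X/2} in the sense that P_out(γ̄)/P_out^{UB}(γ̄) → 1. -/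

import Mathlib

open Real MeasureTheory Set

/-- Pochhammer symbol `(q)_n = q (q+1) ⋯ (q+n-1)`, with `(q)_0 = 1`. -/
noncomputable def poch (q : ℝ) (n : ℕ) : ℝ := ∏ i ∈ Finset.range n, (q + i)

/-- Confluent (Kummer) hypergeometric function `₁F₁(a; b; z)`. -/
noncomputable def oneF1 (a b z : ℝ) : ℝ :=
  ∑' n : ℕ, (poch a n / poch b n) * z ^ n / (n.factorial : ℝ)

/-- Gauss hypergeometric function `₂F₁(a, b; c; z)`. -/
noncomputable def twoF1 (a b c z : ℝ) : ℝ :=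
  ∑' n : ℕ, (poch a n * poch b n / poch c n) * z ^ n / (n.factorial : ℝ)

/-- Confluent Appell (Humbert) function `Φ₂(b₁, b₂; c; x, y)`. -/
noncomputable def Phi2 (b₁ b₂ c x y : ℝ) : ℝ :=
  ∑' p : ℕ × ℕ, (poch b₁ p.1 * poch b₂ p.2 / poch c (p.1 + p.2)) *
    x ^ p.1 * y ^ p.2 / ((p.1.factorial : ℝ) * (p.2.factorial : ℝ))

/-- The α-Beaulieu-Xie shadowed SNR probability density with parameters
`mX, mY, ΩX, ΩY, α`, average SNR `γbar` and normalizing constant `C`, where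
`θ = mY ΩX / (mY ΩX + mX ΩY)` and `δ = mX ΩY / (mY ΩX + mX ΩY)`. -/
noncomputable def aBXpdf (mX mY ΩX ΩY α γbar C γ : ℝ) : ℝ :=
  (α * (mY * ΩX / (mY * ΩX + mX * ΩY)) ^ mY / (2 * C ^ mX * Real.Gamma mX * γbar)) *
    (γ / γbar) ^ (α * mX / 2 - 1) * Real.exp (-(1 / C) * (γ / γbar) ^ (α / 2)) *
    oneF1 mY mX ((mX * ΩY / (mY * ΩX + mX * ΩY)) / C * (γ / γbar) ^ (α / 2))

/-!
After the substitution `γ = γ̄ x`, `γ̄^{α m_X/2} f_{γ̄}(γ) = K γ^{α m_X/2 - 1} g(γ/γ̄)`, where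
`g(u) = exp(-u^{α/2}/C) ₁F₁(m_Y; m_X; δ u^{α/2}/C)` and `K = α θ^{m_Y}/(2 C^{m_X} Γ(m_X))`.
Since `(a)_n/(b)_n ≤ max(1, a/b)^n`, the series of `₁F₁` is dominated on compacts by an
exponential series, so `g` is continuous with `g(0) = 1`. Dominated convergence on `(0, γ_th]`
then gives `γ̄^{α m_X/2} P_out(γ̄) → K γ_th^{α m_X/2}/(α m_X/2)`, which is the claimed constant
because `m_X Γ(m_X) = Γ(m_X + 1)`.
-/

open Filter Topology

noncomputable def oneF1Term (a b z : ℝ) (n : ℕ) : ℝ :=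
  poch a n / poch b n * z ^ n / (n.factorial : ℝ)

lemma poch_nonneg {q : ℝ} (hq : 0 ≤ q) (n : ℕ) : 0 ≤ poch q n :=
  Finset.prod_nonneg fun i _ => by positivity

lemma poch_pos {q : ℝ} (hq : 0 < q) (n : ℕ) : 0 < poch q n :=
  Finset.prod_pos fun i _ => by positivity

lemma poch_div_poch_le {a b : ℝ} (ha : 0 ≤ a) (hb : 0 < b) (n : ℕ) :
    poch a n / poch b n ≤ max 1 (a / b) ^ n := by
  rw [poch, poch, ← Finset.prod_div_distrib]
  refine (Finset.prod_le_prod (fun i _ => by positivity) fun i _ => ?_).trans_eq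
    (Finset.pow_eq_prod_const _ n).symm
  rw [div_le_iff₀ (by positivity)]
  rcases le_total a b with hab | hab
  · calc a + i ≤ 1 * (b + i) := by linarith
      _ ≤ _ := by gcongr; exact le_max_left _ _
  · calc a + i ≤ a + a / b * i := by
          gcongr; exact le_mul_of_one_le_left i.cast_nonneg ((one_le_div hb).2 hab)
      _ = a / b * (b + i) := by field_simp
      _ ≤ _ := by gcongr; exact le_max_right _ _

lemma norm_oneF1Term_le {a b z R : ℝ} (ha : 0 ≤ a) (hb : 0 < b) (hz : |z| ≤ R) (n : ℕ) :
    ‖oneF1Term a b z n‖ ≤ (max 1 (a / b) * R) ^ n / (n.factorial : ℝ) := by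
  rw [oneF1Term, Real.norm_eq_abs, abs_div, abs_mul, abs_div, abs_pow, Nat.abs_cast,
    abs_of_nonneg (poch_nonneg ha n), abs_of_pos (poch_pos hb n), mul_pow]
  gcongr
  exact poch_div_poch_le ha hb n

lemma continuous_oneF1 {a b : ℝ} (ha : 0 ≤ a) (hb : 0 < b) : Continuous (oneF1 a b) := by
  refine continuous_iff_continuousAt.2 fun z => ?_
  have hcont : ContinuousOn (oneF1 a b) (Icc (-(|z| + 1)) (|z| + 1)) :=
    continuousOn_tsum (fun n => by fun_prop) (Real.summable_pow_div_factorial _)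
      fun n x hx => norm_oneF1Term_le ha hb (abs_le.2 hx) n
  exact hcont.continuousAt (Icc_mem_nhds (by linarith [neg_abs_le z]) (by linarith [le_abs_self z]))

lemma oneF1_zero (a b : ℝ) : oneF1 a b 0 = 1 := by
  rw [oneF1, tsum_eq_single 0 fun n hn => by simp [hn]]
  simp [poch]

lemma integrableOn_rpow_sub_one_Ioc {p b : ℝ} (hp : 0 < p) (hb : 0 ≤ b) :
    IntegrableOn (fun x : ℝ => x ^ (p - 1)) (Ioc 0 b) :=
  (intervalIntegrable_iff_integrableOn_Ioc_of_le hb).1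
    (intervalIntegral.intervalIntegrable_rpow' (by linarith))

lemma setIntegral_Ioc_rpow_sub_one {p b : ℝ} (hp : 0 < p) (hb : 0 ≤ b) :
    ∫ x in Ioc 0 b, x ^ (p - 1) = b ^ p / p := by
  rw [← intervalIntegral.integral_of_le hb, integral_rpow (Or.inl (by linarith)),
    sub_add_cancel, Real.zero_rpow hp.ne', sub_zero]

theorem tendsto_setIntegral_rpow_mul_comp_div {g : ℝ → ℝ} (hg : Continuous g) {p b : ℝ}
    (hp : 0 < p) (hb : 0 ≤ b) :
    Tendsto (fun s => ∫ x in Ioc 0 b, x ^ (p - 1) * g (x / s)) atTop (𝓝 (g 0 * (b ^ p / p))) := by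
  obtain ⟨M, hM⟩ := isCompact_Icc.exists_bound_of_continuousOn (hg.continuousOn (s := Icc 0 b))
  rw [← setIntegral_Ioc_rpow_sub_one hp hb, ← integral_const_mul]
  refine tendsto_integral_filter_of_dominated_convergence (fun x => M * x ^ (p - 1))
    (Eventually.of_forall fun s => ?_) ?_ ((integrableOn_rpow_sub_one_Ioc hp hb).const_mul M)
    (ae_of_all _ fun x => ?_)
  · exact ((measurable_id.pow_const _).mul
      (hg.measurable.comp (measurable_id.div_const s))).aestronglyMeasurable
  · filter_upwards [eventually_ge_atTop 1] with s hs
    refine ae_restrict_of_forall_mem measurableSet_Ioc fun x ⟨hx0, hxb⟩ => ?_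
    have hxs : x / s ∈ Icc 0 b := ⟨by positivity, (div_le_self hx0.le hs).trans hxb⟩
    rw [norm_mul, Real.norm_of_nonneg (Real.rpow_nonneg hx0.le _), mul_comm M]
    exact mul_le_mul_of_nonneg_left (hM _ hxs) (by positivity)
  · have : Tendsto (fun s => x / s) atTop (𝓝 0) := tendsto_const_nhds.div_atTop tendsto_id
    simpa [mul_comm] using ((hg.tendsto 0).comp this).const_mul (x ^ (p - 1))

theorem tendsto_rpow_mul_setIntegral_scaleFamily {g : ℝ → ℝ} (hg : Continuous g) {p b : ℝ}
    (hp : 0 < p) (hb : 0 ≤ b) :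
    Tendsto (fun s => s ^ p * ∫ x in Ioc 0 b, s⁻¹ * (x / s) ^ (p - 1) * g (x / s)) atTop
      (𝓝 (g 0 * (b ^ p / p))) := by
  refine (tendsto_setIntegral_rpow_mul_comp_div hg hp hb).congr' ?_
  filter_upwards [eventually_gt_atTop 0] with s hs
  rw [← integral_const_mul]
  refine setIntegral_congr_fun measurableSet_Ioc fun x hx => ?_
  rw [Real.div_rpow hx.1.le hs.le, Real.rpow_sub_one hs.ne']
  field_simp

noncomputable def aBXpdfCorrection (mX mY ΩX ΩY α C u : ℝ) : ℝ :=
  Real.exp (-(1 / C) * u ^ (α / 2)) *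
    oneF1 mY mX ((mX * ΩY / (mY * ΩX + mX * ΩY)) / C * u ^ (α / 2))

lemma aBXpdf_eq (mX mY ΩX ΩY α γbar C γ : ℝ) :
    aBXpdf mX mY ΩX ΩY α γbar C γ =
      α * (mY * ΩX / (mY * ΩX + mX * ΩY)) ^ mY / (2 * C ^ mX * Real.Gamma mX) *
        (γbar⁻¹ * (γ / γbar) ^ (α * mX / 2 - 1) *
          aBXpdfCorrection mX mY ΩX ΩY α C (γ / γbar)) := by
  rw [aBXpdf, aBXpdfCorrection]
  ring

lemma continuous_aBXpdfCorrection {mX mY α : ℝ} (hmX : 0 < mX) (hmY : 0 ≤ mY) (hα : 0 ≤ α)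
    (ΩX ΩY C : ℝ) : Continuous (aBXpdfCorrection mX mY ΩX ΩY α C) := by
  have hu : Continuous fun u : ℝ => u ^ (α / 2) := Real.continuous_rpow_const (by positivity)
  exact (Real.continuous_exp.comp (hu.const_mul _)).mul
    ((continuous_oneF1 hmY hmX).comp (hu.const_mul _))

lemma aBXpdfCorrection_zero {α : ℝ} (hα : α ≠ 0) (mX mY ΩX ΩY C : ℝ) :
    aBXpdfCorrection mX mY ΩX ΩY α C 0 = 1 := by
  simp [aBXpdfCorrection, Real.zero_rpow (div_ne_zero hα two_ne_zero), oneF1_zero]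

/-- High-SNR asymptotics of the outage probability: as `γ̄ → ∞`,
`γ̄^{α m_X/2} P_out(γ̄) → θ^{m_Y} γ_th^{α m_X/2} / (C^{m_X} Γ(m_X + 1))`;
equivalently, `P_out / P_out^{UB} → 1`. -/
theorem statement_10 (mX mY ΩX ΩY α C : ℝ) (hmX : 0 < mX) (hmY : 0 < mY)
    (hΩX : 0 < ΩX) (hΩY : 0 < ΩY) (hα : 0 < α) (hC : 0 < C)
    (γth : ℝ) (hγth : 0 < γth) :
    Filter.Tendsto
        (fun γbar : ℝ => γbar ^ (α * mX / 2) *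
          ∫ γ in Set.Ioc (0 : ℝ) γth, aBXpdf mX mY ΩX ΩY α γbar C γ)
        Filter.atTop
        (nhds ((mY * ΩX / (mY * ΩX + mX * ΩY)) ^ mY * γth ^ (α * mX / 2) /
          (C ^ mX * Real.Gamma (mX + 1)))) ∧
      Filter.Tendsto
        (fun γbar : ℝ =>
          (∫ γ in Set.Ioc (0 : ℝ) γth, aBXpdf mX mY ΩX ΩY α γbar C γ) /
            ((mY * ΩX / (mY * ΩX + mX * ΩY)) ^ mY / (C ^ mX * Real.Gamma (mX + 1)) *
              (γth / γbar) ^ (α * mX / 2)))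
        Filter.atTop (nhds 1) := by
  have hp : 0 < α * mX / 2 := by positivity
  have hscaled : Tendsto (fun γbar : ℝ => γbar ^ (α * mX / 2) *
      ∫ γ in Ioc 0 γth, aBXpdf mX mY ΩX ΩY α γbar C γ) atTop
      (𝓝 ((mY * ΩX / (mY * ΩX + mX * ΩY)) ^ mY * γth ^ (α * mX / 2) /
        (C ^ mX * Real.Gamma (mX + 1)))) := by
    convert (tendsto_rpow_mul_setIntegral_scaleFamily
      (continuous_aBXpdfCorrection hmX hmY.le hα.le ΩX ΩY C) hp hγth.le).const_mul
        (α * (mY * ΩX / (mY * ΩX + mX * ΩY)) ^ mY / (2 * C ^ mX * Real.Gamma mX)) using 2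
    · simp_rw [aBXpdf_eq, integral_const_mul]
      ring
    · rw [aBXpdfCorrection_zero hα.ne', Real.Gamma_add_one hmX.ne']
      field_simp
  refine ⟨hscaled, ?_⟩
  have hL0 : (mY * ΩX / (mY * ΩX + mX * ΩY)) ^ mY * γth ^ (α * mX / 2) /
      (C ^ mX * Real.Gamma (mX + 1)) ≠ 0 := by positivity
  refine (div_self hL0 ▸ hscaled.div_const _).congr' ?_
  filter_upwards [eventually_gt_atTop 0] with γbar hγbar
  rw [Real.div_rpow hγth.le hγbar.le]
  field_simp
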